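/- Let L₁(ξ) = √(8/(1 + 4ξ²)) be the σ = 1 algebraic lump soliton. Then ∫_0^∞ [ (ξ² L₁(ξ)⁶)/4 + (1 − L₁(ξ)²/4) ( −2 L₁(ξ)² ln L₁(ξ) + L₁(ξ)²/2 − ξ² L₁(ξ)⁴ ) ] dξ = 2π. -/

import Mathlib

open MeasureTheory

noncomputable def lumpG (x : ℝ) : ℝ :=
  (-12 * (1 + 4 * x ^ 2) ^ 2 + 72 * (1 + 4 * x ^ 2) - 64) / (1 + 4 * x ^ 2) ^ 3
    + (8 * (1 + 4 * x ^ 2) - 16) * (Real.log (1 + 4 * x ^ 2) - Real.log 8)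
        / (1 + 4 * x ^ 2) ^ 2

noncomputable def lumpF (x : ℝ) : ℝ :=
  4 * Real.arctan (2 * x) + 4 * x / (1 + 4 * x ^ 2) - 16 * x / (1 + 4 * x ^ 2) ^ 2
    - 8 * x * (Real.log (1 + 4 * x ^ 2) - Real.log 8) / (1 + 4 * x ^ 2)

lemma lump_u_pos (x : ℝ) : (0 : ℝ) < 1 + 4 * x ^ 2 := by positivity

lemma lump_log_bound {x : ℝ} (hx : 1 ≤ x) :
    Real.log (1 + 4 * x ^ 2) ≤ 8 * Real.sqrt x := by
  set u : ℝ := 1 + 4 * x ^ 2 with hu_def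
  have hu : (0:ℝ) < u := lump_u_pos x
  have hx0 : (0:ℝ) < x := lt_of_lt_of_le one_pos hx
  set s : ℝ := Real.sqrt x with hs_def
  have hs2 : s ^ 2 = x := Real.sq_sqrt hx0.le
  have hs0 : (0:ℝ) < s := Real.sqrt_pos.2 hx0
  have h1 : Real.sqrt u ≤ 4 * x := by
    rw [show (4:ℝ) * x = Real.sqrt ((4 * x) ^ 2) from (Real.sqrt_sq (by positivity)).symm]
    exact Real.sqrt_le_sqrt (by nlinarith)
  have h2 : Real.sqrt (Real.sqrt u) ≤ 2 * s := by
    rw [show (2:ℝ) * s = Real.sqrt ((2 * s) ^ 2) from (Real.sqrt_sq (by positivity)).symm]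
    apply Real.sqrt_le_sqrt
    calc Real.sqrt u ≤ 4 * x := h1
      _ = (2 * s) ^ 2 := by rw [mul_pow]; rw [hs2]; ring
  have e1 : Real.log u = 4 * Real.log (Real.sqrt (Real.sqrt u)) := by
    rw [Real.log_sqrt (Real.sqrt_nonneg _), Real.log_sqrt hu.le]; ring
  have e2 : Real.log (Real.sqrt (Real.sqrt u)) ≤ Real.sqrt (Real.sqrt u) := by
    have := Real.log_le_sub_one_of_pos
      (show (0:ℝ) < Real.sqrt (Real.sqrt u) by positivity)
    linarith
  calc Real.log u = 4 * Real.log (Real.sqrt (Real.sqrt u)) := e1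
    _ ≤ 4 * Real.sqrt (Real.sqrt u) := by linarith
    _ ≤ 4 * (2 * s) := by linarith
    _ = 8 * s := by ring

lemma lump_hasDerivAt (x : ℝ) : HasDerivAt lumpF (lumpG x) x := by
  have hu : (0:ℝ) < 1 + 4 * x ^ 2 := lump_u_pos x
  have hu' : (1 + 4 * x ^ 2 : ℝ) ≠ 0 := hu.ne'
  have h1 : HasDerivAt (fun y : ℝ => 1 + 4 * y ^ 2) (8 * x) x := by
    have h := ((hasDerivAt_pow 2 x).const_mul (4:ℝ)).const_add (1:ℝ)
    convert h using 1
    rfl; rfl; simp; ring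
  have h2x : HasDerivAt (fun y : ℝ => 2 * y) 2 x := by
    simpa using (hasDerivAt_id x).const_mul (2:ℝ)
  have harc : HasDerivAt (fun y : ℝ => 4 * Real.arctan (2 * y))
      (4 * (1 / (1 + (2 * x) ^ 2) * 2)) x := (h2x.arctan).const_mul 4
  have hid4 : HasDerivAt (fun y : ℝ => 4 * y) 4 x := by
    simpa using (hasDerivAt_id x).const_mul (4:ℝ)
  have hid16 : HasDerivAt (fun y : ℝ => 16 * y) 16 x := by
    simpa using (hasDerivAt_id x).const_mul (16:ℝ)
  have hq1 : HasDerivAt (fun y : ℝ => 4 * y / (1 + 4 * y ^ 2))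
      ((4 * (1 + 4 * x ^ 2) - 4 * x * (8 * x)) / (1 + 4 * x ^ 2) ^ 2) x :=
    hid4.div h1 hu'
  have hu2 : HasDerivAt (fun y : ℝ => (1 + 4 * y ^ 2) ^ 2)
      (2 * (1 + 4 * x ^ 2) ^ 1 * (8 * x)) x := h1.pow 2
  have hq2 : HasDerivAt (fun y : ℝ => 16 * y / (1 + 4 * y ^ 2) ^ 2)
      ((16 * (1 + 4 * x ^ 2) ^ 2 - 16 * x * (2 * (1 + 4 * x ^ 2) ^ 1 * (8 * x)))
        / ((1 + 4 * x ^ 2) ^ 2) ^ 2) x :=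
    hid16.div hu2 (by positivity)
  have hid8 : HasDerivAt (fun y : ℝ => 8 * y) 8 x := by
    simpa using (hasDerivAt_id x).const_mul (8:ℝ)
  have hlog : HasDerivAt (fun y : ℝ => Real.log (1 + 4 * y ^ 2) - Real.log 8)
      (8 * x / (1 + 4 * x ^ 2)) x := (h1.log hu').sub_const _
  have hnum : HasDerivAt
      (fun y : ℝ => 8 * y * (Real.log (1 + 4 * y ^ 2) - Real.log 8))
      (8 * (Real.log (1 + 4 * x ^ 2) - Real.log 8)
        + 8 * x * (8 * x / (1 + 4 * x ^ 2))) x := hid8.mul hlog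
  have hq3 : HasDerivAt
      (fun y : ℝ => 8 * y * (Real.log (1 + 4 * y ^ 2) - Real.log 8) / (1 + 4 * y ^ 2))
      (((8 * (Real.log (1 + 4 * x ^ 2) - Real.log 8)
          + 8 * x * (8 * x / (1 + 4 * x ^ 2))) * (1 + 4 * x ^ 2)
        - 8 * x * (Real.log (1 + 4 * x ^ 2) - Real.log 8) * (8 * x))
        / (1 + 4 * x ^ 2) ^ 2) x := hnum.div h1 hu'
  have H := ((harc.add hq1).sub hq2).sub hq3
  convert H using 1
  rfl; rfl; rfl
  unfold lumpG
  have h4 : (1 + (2 * x) ^ 2 : ℝ) ≠ 0 := by positivity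
  field_simp
  ring

lemma lump_tendsto : Filter.Tendsto lumpF Filter.atTop (nhds (2 * Real.pi)) := by
  have hsqrt : Filter.Tendsto Real.sqrt Filter.atTop Filter.atTop := by
    refine (tendsto_rpow_atTop (show (0:ℝ) < 1/2 by norm_num)).congr' ?_
    filter_upwards [Filter.eventually_ge_atTop (0:ℝ)] with x hx
    exact (Real.sqrt_eq_rpow x).symm
  have t1 : Filter.Tendsto (fun x : ℝ => 4 * Real.arctan (2 * x)) Filter.atTop
      (nhds (4 * (Real.pi / 2))) := by
    have h2x : Filter.Tendsto (fun x : ℝ => 2 * x) Filter.atTop Filter.atTop :=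
      Filter.tendsto_id.const_mul_atTop (by norm_num)
    exact ((Real.tendsto_arctan_atTop.mono_right nhdsWithin_le_nhds).comp h2x).const_mul 4
  have t2 : Filter.Tendsto (fun x : ℝ => 4 * x / (1 + 4 * x ^ 2)) Filter.atTop (nhds 0) := by
    apply squeeze_zero' (g := fun x : ℝ => 1 / x)
    · filter_upwards [Filter.eventually_ge_atTop (1:ℝ)] with x hx
      positivity
    · filter_upwards [Filter.eventually_ge_atTop (1:ℝ)] with x hx
      rw [div_le_div_iff₀ (lump_u_pos x) (by linarith)]
      nlinarith
    · exact Filter.Tendsto.div_atTop tendsto_const_nhds Filter.tendsto_id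
  have t3 : Filter.Tendsto (fun x : ℝ => 16 * x / (1 + 4 * x ^ 2) ^ 2) Filter.atTop
      (nhds 0) := by
    apply squeeze_zero' (g := fun x : ℝ => 1 / x)
    · filter_upwards [Filter.eventually_ge_atTop (1:ℝ)] with x hx
      positivity
    · filter_upwards [Filter.eventually_ge_atTop (1:ℝ)] with x hx
      rw [div_le_div_iff₀ (by positivity) (by linarith)]
      nlinarith [sq_nonneg (4 * x ^ 2 - 1)]
    · exact Filter.Tendsto.div_atTop tendsto_const_nhds Filter.tendsto_id
  have t4 : Filter.Tendsto
      (fun x : ℝ => 8 * x * (Real.log (1 + 4 * x ^ 2) - Real.log 8) / (1 + 4 * x ^ 2))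
      Filter.atTop (nhds 0) := by
    apply squeeze_zero' (g := fun x : ℝ => 16 / Real.sqrt x)
    · filter_upwards [Filter.eventually_ge_atTop (2:ℝ)] with x hx
      have hlog : Real.log 8 ≤ Real.log (1 + 4 * x ^ 2) := by
        apply Real.log_le_log (by norm_num)
        nlinarith
      have h8 : (0:ℝ) ≤ 8 * x := by linarith
      exact div_nonneg (mul_nonneg h8 (by linarith)) (lump_u_pos x).le
    · filter_upwards [Filter.eventually_ge_atTop (2:ℝ)] with x hx
      have hx1 : (1:ℝ) ≤ x := by linarith
      have hx0 : (0:ℝ) < x := by linarith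
      have hs0 : (0:ℝ) < Real.sqrt x := Real.sqrt_pos.2 hx0
      have hs2 : Real.sqrt x ^ 2 = x := Real.sq_sqrt hx0.le
      have hlogb := lump_log_bound hx1
      have hlog8 : (0:ℝ) ≤ Real.log 8 := Real.log_nonneg (by norm_num)
      have hLpos : (0:ℝ) ≤ Real.log (1 + 4 * x ^ 2) - Real.log 8 := by
        have : Real.log 8 ≤ Real.log (1 + 4 * x ^ 2) :=
          Real.log_le_log (by norm_num) (by nlinarith)
        linarith
      have hle : Real.log (1 + 4 * x ^ 2) - Real.log 8 ≤ 8 * Real.sqrt x := by linarith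
      rw [div_le_div_iff₀ (lump_u_pos x) hs0]
      nlinarith [mul_le_mul_of_nonneg_right
        (mul_le_mul_of_nonneg_left hle (by linarith : (0:ℝ) ≤ 8 * x)) hs0.le, hs2,
        mul_le_mul_of_nonneg_left hs2.le (by linarith : (0:ℝ) ≤ 64 * x)]
    · exact Filter.Tendsto.div_atTop tendsto_const_nhds hsqrt
  have := ((t1.add t2).sub t3).sub t4
  have h2pi : 4 * (Real.pi / 2) + 0 - 0 - 0 = 2 * Real.pi := by ring
  rw [h2pi] at this
  exact this.congr (fun x => by unfold lumpF; ring)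

lemma lump_continuous : Continuous lumpG := by
  have hvu : ∀ x : ℝ, (1 + 4 * x ^ 2 : ℝ) ≠ 0 := fun x => (lump_u_pos x).ne'
  have hcu : Continuous fun x : ℝ => 1 + 4 * x ^ 2 := by continuity
  have hlog : Continuous fun x : ℝ => Real.log (1 + 4 * x ^ 2) := hcu.log hvu
  apply Continuous.add
  · exact Continuous.div (by continuity) (by continuity) (fun x => by positivity)
  · exact Continuous.div ((by continuity : Continuous fun x : ℝ =>
      (8 * (1 + 4 * x ^ 2) - 16 : ℝ)).mul (hlog.sub continuous_const))
      (by continuity) (fun x => by positivity)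

lemma lump_integrable : IntegrableOn lumpG (Set.Ioi (0:ℝ)) := by
  have h01 : IntegrableOn lumpG (Set.Ioc (0:ℝ) 1) :=
    (lump_continuous.continuousOn.integrableOn_Icc).mono_set Set.Ioc_subset_Icc_self
  have hbnd : IntegrableOn (fun x : ℝ => 200 / (x * Real.sqrt x)) (Set.Ioi (1:ℝ)) := by
    have h := integrableOn_Ioi_rpow_of_lt (show (-(3:ℝ)/2) < -1 by norm_num)
      (zero_lt_one (α := ℝ))
    have h2 : IntegrableOn (fun x : ℝ => 200 * x ^ (-(3:ℝ)/2)) (Set.Ioi (1:ℝ)) :=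
      h.const_mul 200
    apply h2.congr_fun ?_ measurableSet_Ioi
    intro x hx
    have hx0 : (0:ℝ) < x := lt_trans one_pos hx
    show (200 : ℝ) * x ^ (-(3:ℝ)/2) = 200 / (x * Real.sqrt x)
    have : x ^ ((3:ℝ)/2) = x * Real.sqrt x := by
      rw [show ((3:ℝ)/2) = (1 : ℝ) + 1/2 by norm_num, Real.rpow_add hx0,
        Real.rpow_one, Real.sqrt_eq_rpow]
    rw [show (-(3:ℝ)/2) = -((3:ℝ)/2) by norm_num, Real.rpow_neg hx0.le, this]
    rw [div_eq_mul_inv]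
  have h1i : IntegrableOn lumpG (Set.Ioi (1:ℝ)) := by
    apply Integrable.mono' hbnd
      (lump_continuous.aestronglyMeasurable)
    rw [ae_restrict_iff' measurableSet_Ioi]
    apply ae_of_all
    intro x hx
    have hx1 : (1:ℝ) < x := hx
    have hx0 : (0:ℝ) < x := lt_trans one_pos hx1
    set u : ℝ := 1 + 4 * x ^ 2 with hu_def
    have hu : (0:ℝ) < u := lump_u_pos x
    set s : ℝ := Real.sqrt x with hs_def
    have hs2 : s ^ 2 = x := Real.sq_sqrt hx0.le
    have hs1 : (1:ℝ) ≤ s := by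
      rw [show (1:ℝ) = Real.sqrt 1 from (Real.sqrt_one).symm]
      exact Real.sqrt_le_sqrt hx1.le
    have hs0 : (0:ℝ) < s := lt_of_lt_of_le one_pos hs1
    have hu4 : 4 * s ^ 4 ≤ u := by
      have : s ^ 4 = x ^ 2 := by nlinarith [hs2]
      rw [hu_def, this]; nlinarith
    have hu5 : (5:ℝ) ≤ u := by rw [hu_def]; nlinarith
    have hlogu1 : (1:ℝ) ≤ Real.log u := by
      rw [Real.le_log_iff_exp_le hu]
      have := Real.exp_one_lt_d9
      linarith
    have hlog8 : Real.log 8 ≤ 7 := by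
      have := Real.log_le_sub_one_of_pos (show (0:ℝ) < 8 by norm_num)
      linarith
    have hlog8' : (0:ℝ) ≤ Real.log 8 := Real.log_nonneg (by norm_num)
    have hlogs : Real.log u ≤ 8 * s := lump_log_bound hx1.le
    have habs : |Real.log u - Real.log 8| ≤ 8 * Real.log u := by
      rw [abs_sub_le_iff]
      constructor <;> linarith
    have hxs : x * s = s ^ 3 := by nlinarith [hs2]
    have key1 : |(-12 * u ^ 2 + 72 * u - 64) / u ^ 3| ≤ 37 / (x * s) := by
      rw [abs_div, abs_of_pos (by positivity : (0:ℝ) < u ^ 3),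
        div_le_div_iff₀ (by positivity) (by positivity)]
      have hN : |(-12 * u ^ 2 + 72 * u - 64 : ℝ)| ≤ 148 * u ^ 2 := by
        rw [abs_le]; constructor <;> nlinarith
      rw [hxs]
      have a1 := mul_le_mul_of_nonneg_right hN (le_of_lt (pow_pos hs0 3))
      have a2 := mul_le_mul_of_nonneg_left
        (pow_le_pow_right₀ hs1 (by norm_num : 3 ≤ 4))
        (by positivity : (0:ℝ) ≤ 148 * u ^ 2)
      have a3 := mul_le_mul_of_nonneg_left hu4
        (by positivity : (0:ℝ) ≤ 37 * u ^ 2)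
      nlinarith [a1, a2, a3]
    have key2 : |(8 * u - 16) * (Real.log u - Real.log 8) / u ^ 2| ≤ 163 / (x * s) := by
      rw [abs_div, abs_of_pos (by positivity : (0:ℝ) < u ^ 2),
        div_le_div_iff₀ (by positivity) (by positivity)]
      have hM : |(8 * u - 16) * (Real.log u - Real.log 8)|
          ≤ 8 * u * (8 * Real.log u) := by
        rw [abs_mul]
        apply mul_le_mul ?_ habs (abs_nonneg _) (by positivity)
        rw [abs_of_pos (by linarith : (0:ℝ) < 8 * u - 16)]; linarith
      rw [hxs]
      have a1 := mul_le_mul_of_nonneg_right hM (le_of_lt (pow_pos hs0 3))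
      have a2 := mul_le_mul_of_nonneg_left hlogs
        (by positivity : (0:ℝ) ≤ 64 * u * s ^ 3)
      have a3 := mul_le_mul_of_nonneg_left hu4
        (by positivity : (0:ℝ) ≤ 128 * u)
      nlinarith [a1, a2, a3, hu.le]
    calc ‖lumpG x‖ ≤ |(-12 * u ^ 2 + 72 * u - 64) / u ^ 3|
          + |(8 * u - 16) * (Real.log u - Real.log 8) / u ^ 2| := by
          rw [Real.norm_eq_abs]; exact abs_add_le _ _
      _ ≤ 37 / (x * s) + 163 / (x * s) := add_le_add key1 key2
      _ = 200 / (x * Real.sqrt x) := by rw [← hs_def, ← add_div]; norm_num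
  have := h01.union h1i
  rwa [Set.Ioc_union_Ioi_eq_Ioi (zero_le_one (α := ℝ))] at this

/-- **An explicit lump integral.**
For the lump soliton `L₁(ξ) = √(8/(1+4ξ²))`, one has
`∫_0^∞ [ξ²L₁⁶/4 + (1 − L₁²/4)(−2L₁² ln L₁ + L₁²/2 − ξ²L₁⁴)] dξ = 2π`. -/
theorem lump_momentum_integral
    (L : ℝ → ℝ) (hL : ∀ ξ : ℝ, L ξ = Real.sqrt (8 / (1 + 4 * ξ ^ 2))) :
    (∫ ξ in Set.Ioi (0 : ℝ),
      (ξ ^ 2 * (L ξ) ^ 6 / 4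
        + (1 - (L ξ) ^ 2 / 4) *
            (-2 * (L ξ) ^ 2 * Real.log (L ξ) + (L ξ) ^ 2 / 2 - ξ ^ 2 * (L ξ) ^ 4)))
      = 2 * Real.pi := by
  have hkey : ∀ ξ : ℝ,
      (ξ ^ 2 * (L ξ) ^ 6 / 4
        + (1 - (L ξ) ^ 2 / 4) *
            (-2 * (L ξ) ^ 2 * Real.log (L ξ) + (L ξ) ^ 2 / 2 - ξ ^ 2 * (L ξ) ^ 4))
      = lumpG ξ := by
    intro ξ
    have hu : (0:ℝ) < 1 + 4 * ξ ^ 2 := lump_u_pos ξ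
    have hl2 : (L ξ) ^ 2 = 8 / (1 + 4 * ξ ^ 2) := by
      rw [hL]; exact Real.sq_sqrt (by positivity)
    have hlog : Real.log (L ξ)
        = (Real.log 8 - Real.log (1 + 4 * ξ ^ 2)) / 2 := by
      rw [hL, Real.log_sqrt (by positivity),
        Real.log_div (by norm_num) hu.ne']
    have hl4 : (L ξ) ^ 4 = (8 / (1 + 4 * ξ ^ 2)) ^ 2 := by
      rw [← hl2]; ring
    have hl6 : (L ξ) ^ 6 = (8 / (1 + 4 * ξ ^ 2)) ^ 3 := by
      rw [← hl2]; ring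
    rw [hl2, hl4, hl6, hlog]
    unfold lumpG
    field_simp
    ring
  rw [MeasureTheory.setIntegral_congr_fun measurableSet_Ioi (fun ξ _ => hkey ξ)]
  rw [MeasureTheory.integral_Ioi_of_hasDerivAt_of_tendsto'
    (fun x _ => lump_hasDerivAt x) lump_integrable lump_tendsto]
  have : lumpF 0 = 0 := by unfold lumpF; simp
  rw [this, sub_zero]
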